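/- arXiv:nlin/0010048 — 7 statements merged into one kernel-verified Lean document; each statement's English description precedes it below -/
import Mathlib

section
/- Let ρ_0,...,ρ_{n-1} be integrable weight functions on ℝ with moments μ_{ij} = ∫ z^i ρ_j(z) dz finite for 0 ≤ i ≤ n. Then det(∫ z^i (λ - z) ρ_j(z) dz)_{0≤i,j≤n-1} equals the determinant of the (n+1)×(n+1) matrix whose (i,j) entry for j < n is ∫ z^i ρ_j(z) dz and whose last column is (1, λ, λ^2, ..., λ^n)^T. -/
open MeasureTheory

open MeasureTheory

lemma key_la (n : ℕ) (μ : Fin (n+1) → Fin n → ℝ) (lam : ℝ) :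
    Matrix.det (Matrix.of fun i j : Fin n =>
        lam * μ i.castSucc j - μ i.succ j) =
      Matrix.det (Matrix.of fun i j : Fin (n + 1) =>
        if h : (j : ℕ) < n then μ i ⟨j, h⟩ else lam ^ (i : ℕ)) := by
  set B : Matrix (Fin (n+1)) (Fin (n+1)) ℝ :=
    Matrix.of (fun i j => if h : (j : ℕ) < n then μ i ⟨j, h⟩ else lam ^ (i : ℕ)) with hB
  set L : Matrix (Fin (n+1)) (Fin (n+1)) ℝ :=
    Matrix.of (fun i k => (if k = i then (1:ℝ) else 0) +
      (if (k:ℕ) + 1 = (i:ℕ) then -lam else 0)) with hL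
  have hLtri : L.BlockTriangular OrderDual.toDual := by
    intro i k h
    have hik : i < k := h
    have h1 : k ≠ i := (ne_of_gt hik)
    have h2 : (k:ℕ) + 1 ≠ (i:ℕ) := by omega
    simp [hL, h1, h2]
  have hLdet : L.det = 1 := by
    rw [Matrix.det_of_lowerTriangular L hLtri]
    simp [hL]
  set C : Matrix (Fin (n+1)) (Fin (n+1)) ℝ :=
    Matrix.of (fun i j => Fin.cases (B 0 j)
      (fun i' => B i'.succ j - lam * B i'.castSucc j) i) with hC
  have hLB : L * B = C := by
    ext i j
    rw [Matrix.mul_apply]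
    induction i using Fin.cases with
    | zero =>
        simp [hL, hC, ite_mul, Finset.sum_ite_eq']
    | succ i' =>
        have hcond : ∀ k : Fin (n+1), ((k:ℕ) + 1 = ((i'.succ : Fin (n+1)) :ℕ)) = (k = i'.castSucc) := by
          intro k
          simp [Fin.ext_iff]
        simp only [hL, Matrix.of_apply, add_mul, Finset.sum_add_distrib, ite_mul, one_mul,
          zero_mul, neg_mul, hcond, Finset.sum_ite_eq', Finset.mem_univ, if_true]
        simp [hC, sub_eq_add_neg]
  have hClast0 : C 0 (Fin.last n) = 1 := by
    simp [hC, hB, Fin.last]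
  have hClast : ∀ i' : Fin n, C i'.succ (Fin.last n) = 0 := by
    intro i'
    simp [hC, hB, Fin.last, pow_succ, mul_comm]
  have hdetC : C.det = (-1)^n * Matrix.det (Matrix.of fun i j : Fin n =>
      μ i.succ j - lam * μ i.castSucc j) := by
    rw [Matrix.det_succ_column C (Fin.last n)]
    rw [Finset.sum_eq_single 0]
    · have hsub : (C.submatrix (Fin.succAbove 0) (Fin.succAbove (Fin.last n))) =
        Matrix.of fun i j : Fin n => μ i.succ j - lam * μ i.castSucc j := by
        ext i j
        have hjlt : ((j.castSucc : Fin (n+1)) : ℕ) < n := by simp [j.is_lt]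
        simp [Fin.succAbove_last, hC, hB, hjlt]
      rw [hsub, hClast0]
      simp [Fin.last]
    · intro i _ hi
      obtain ⟨i', rfl⟩ := Fin.eq_succ_of_ne_zero hi
      rw [hClast i', mul_zero, zero_mul]
    · simp
  have h1 : B.det = C.det := by
    rw [← hLB, Matrix.det_mul, hLdet, one_mul]
  have h2 : Matrix.det (Matrix.of fun i j : Fin n =>
      lam * μ i.castSucc j - μ i.succ j) =
      (-1)^n * Matrix.det (Matrix.of fun i j : Fin n =>
      μ i.succ j - lam * μ i.castSucc j) := by
    have : (Matrix.of fun i j : Fin n => lam * μ i.castSucc j - μ i.succ j) =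
        -(Matrix.of fun i j : Fin n => μ i.succ j - lam * μ i.castSucc j) := by
      ext i j; simp [Matrix.neg_apply]
    rw [this, Matrix.det_neg]
    simp
  rw [h2, ← hdetC, ← h1]

/-- For integrable weights `ρ_0,…,ρ_{n-1}` on ℝ with finite moments
`μ_{ij} = ∫ z^i ρ_j(z) dz` (0 ≤ i ≤ n), one has
`det(∫ z^i (λ - z) ρ_j(z) dz)_{0≤i,j≤n-1}` equals the determinant of the
(n+1)×(n+1) matrix whose j-th column (j < n) is `(∫ z^i ρ_j)_i` and whose last
column is `(1, λ, …, λ^n)ᵀ`. -/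
theorem stmt2 (n : ℕ) (ρ : Fin n → ℝ → ℝ) (lam : ℝ)
    (hint : ∀ (i : Fin (n + 1)) (j : Fin n),
      Integrable (fun z : ℝ => z ^ (i : ℕ) * ρ j z)) :
    Matrix.det (Matrix.of fun i j : Fin n =>
        ∫ z : ℝ, z ^ (i : ℕ) * (lam - z) * ρ j z) =
      Matrix.det (Matrix.of fun i j : Fin (n + 1) =>
        if h : (j : ℕ) < n then ∫ z : ℝ, z ^ (i : ℕ) * ρ ⟨j, h⟩ z
        else lam ^ (i : ℕ)) := by
  set μ : Fin (n+1) → Fin n → ℝ := fun i j => ∫ z : ℝ, z ^ (i : ℕ) * ρ j z with hμ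
  have hentry : ∀ (i : Fin n) (j : Fin n),
      (∫ z : ℝ, z ^ (i : ℕ) * (lam - z) * ρ j z) =
        lam * μ i.castSucc j - μ i.succ j := by
    intro i j
    have hfe : (fun z : ℝ => z ^ (i : ℕ) * (lam - z) * ρ j z) =
        fun z : ℝ => lam * (z ^ ((i.castSucc : Fin (n+1)) : ℕ) * ρ j z) -
          z ^ ((i.succ : Fin (n+1)) : ℕ) * ρ j z := by
      funext z
      simp [Fin.val_succ, pow_succ]
      ring
    rw [hfe, integral_sub ((hint i.castSucc j).const_mul lam) (hint i.succ j),
      MeasureTheory.integral_const_mul]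
  have : (Matrix.of fun i j : Fin n => ∫ z : ℝ, z ^ (i : ℕ) * (lam - z) * ρ j z) =
      Matrix.of fun i j : Fin n => lam * μ i.castSucc j - μ i.succ j := by
    ext i j; exact hentry i j
  rw [this, key_la]
end

section
/- For any (n+1)×n matrix (μ_{ij})_{0≤i≤n, 0≤j≤n-1} over a commutative ring and scalar λ, the determinant of the n×n matrix with entries λ μ_{ij} - μ_{i+1,j} (0 ≤ i,j ≤ n-1) equals the determinant of the (n+1)×(n+1) matrix obtained by appending the column (1, λ, λ^2, ..., λ^n)^T to (μ_{ij}). -/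
/-!
Subtracting `lam` times each row of the bordered matrix from the next one, bottom up, does not
change its determinant; it turns the last column `(lam ^ i)` into `(1, 0, …, 0)` and the rows
below the first into `μ (i + 1) - lam • μ i`. Expanding along the last column leaves the minor
`-(lam • μ i - μ (i + 1))`, and the signs `(-1) ^ n` of the expansion and of the negation cancel.
-/

open Matrix

namespace Matrix

variable {R : Type*} [CommRing R] {n : ℕ}

theorem det_succ_of_col_last_eq_zero (B : Matrix (Fin (n + 1)) (Fin (n + 1)) R)
    (hB : ∀ i : Fin n, B i.succ (Fin.last n) = 0) :
    B.det = (-1) ^ n * B 0 (Fin.last n) * (B.submatrix Fin.succ Fin.castSucc).det := by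
  rw [det_succ_column B (Fin.last n), Finset.sum_eq_single 0]
  · simp [Fin.succAbove_zero, Fin.succAbove_last]
  · intro i _ hi
    obtain ⟨i, rfl⟩ := Fin.exists_succ_eq.mpr hi
    simp [hB]
  · simp

theorem det_eq_det_sub_of_col_last_eq_pow (A : Matrix (Fin (n + 1)) (Fin (n + 1)) R) (lam : R)
    (hA : ∀ i, A i (Fin.last n) = lam ^ (i : ℕ)) :
    A.det = (of fun i j : Fin n => lam * A i.castSucc j.castSucc - A i.succ j.castSucc).det := by
  set B : Matrix (Fin (n + 1)) (Fin (n + 1)) R :=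
    of fun i j => Fin.cases (A 0 j) (fun i => A i.succ j - lam * A i.castSucc j) i
  have hAB : A.det = B.det :=
    det_eq_of_forall_row_eq_smul_add_pred (fun _ => lam) (fun _ => rfl) (fun i j => by simp [B])
  have hB : ∀ i : Fin n, B i.succ (Fin.last n) = 0 := fun i => by
    simp [B, hA, pow_succ']
  have hsub : B.submatrix Fin.succ Fin.castSucc =
      -of fun i j : Fin n => lam * A i.castSucc j.castSucc - A i.succ j.castSucc := by
    ext i j
    simp [B]
  rw [hAB, det_succ_of_col_last_eq_zero B hB, hsub, det_neg]
  simp [B, hA, ← mul_assoc, ← pow_add, ← two_mul, pow_mul]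

end Matrix

/-- For any (n+1)×n matrix `μ` over a commutative ring and a scalar `λ`,
`det(λ μ_{ij} - μ_{i+1,j})_{0≤i,j≤n-1}` equals the determinant of the (n+1)×(n+1)
matrix obtained by appending the column `(1, λ, …, λ^n)ᵀ` to `μ`. -/
theorem stmt3 {R : Type*} [CommRing R] (n : ℕ) (μ : Fin (n + 1) → Fin n → R) (lam : R) :
    Matrix.det (Matrix.of fun i j : Fin n =>
        lam * μ i.castSucc j - μ i.succ j) =
      Matrix.det (Matrix.of fun i j : Fin (n + 1) =>
        if h : (j : ℕ) < n then μ i ⟨j, h⟩ else lam ^ (i : ℕ)) := by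
  rw [det_eq_det_sub_of_col_last_eq_pow _ lam (fun i => by simp)]
  simp
end

section
/- Addition formula for moment determinants: for an n×n Hankel moment matrix m_n(ρ) = (μ_{i+j}(ρ))_{0≤i,j≤n-1} with μ_k(ρ) = ∫ z^k ρ(z) dz, and for u ∈ ℝ, c ∈ ℝ, one has det(m_n(ρ) + c χ_n(u) ⊗ χ_n(u)) = det m_n(ρ) + c · det m_{n-1}((z - u)^2 ρ(z)), where χ_n(u) ⊗ χ_n(u) = (u^{i+j})_{0≤i,j≤n-1} and m_{n-1}((z-u)^2 ρ) is the (n-1)×(n-1) Hankel matrix of moments of the weight (z-u)^2 ρ(z). -/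
open MeasureTheory Matrix

lemma hankel_aux (m : ℕ) (μ : ℕ → ℝ) (u c : ℝ) :
    (Matrix.of fun i j : Fin (m+1) => μ ((i:ℕ)+(j:ℕ)) + c * u^((i:ℕ)+(j:ℕ))).det =
    (Matrix.of fun i j : Fin (m+1) => μ ((i:ℕ)+(j:ℕ))).det +
    c * (Matrix.of fun i j : Fin m =>
        μ ((i:ℕ)+(j:ℕ)+2) - 2*u*μ ((i:ℕ)+(j:ℕ)+1) + u^2 * μ ((i:ℕ)+(j:ℕ))).det := by
  classical
  set R : Matrix (Fin (m+1)) (Fin (m+1)) ℝ :=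
    Matrix.of fun i j => (if j = i then (1:ℝ) else 0) + (if (j:ℕ)+1 = (i:ℕ) then -u else 0)
    with hRdef
  have hRlow : R.BlockTriangular OrderDual.toDual := by
    intro i j hij
    have h : (i:ℕ) < (j:ℕ) := hij
    simp only [hRdef, Matrix.of_apply]
    rw [if_neg, if_neg]
    · ring
    · omega
    · intro h'; rw [h'] at h; omega
  have hRdet : R.det = 1 := by
    rw [Matrix.det_of_lowerTriangular R hRlow]
    simp [hRdef]
  have hmulL0 : ∀ (M : Matrix (Fin (m+1)) (Fin (m+1)) ℝ) (j : Fin (m+1)),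
      (R * M) 0 j = M 0 j := by
    intro M j
    simp only [Matrix.mul_apply, hRdef, Matrix.of_apply, add_mul, ite_mul, one_mul, zero_mul,
      neg_mul, Finset.sum_add_distrib]
    rw [Finset.sum_ite_eq' Finset.univ (0 : Fin (m+1)) (fun k => M k j)]
    simp
  have hmulLs : ∀ (M : Matrix (Fin (m+1)) (Fin (m+1)) ℝ) (i : Fin m) (j : Fin (m+1)),
      (R * M) i.succ j = M i.succ j - u * M i.castSucc j := by
    intro M i j
    simp only [Matrix.mul_apply, hRdef, Matrix.of_apply, add_mul, ite_mul, one_mul, zero_mul,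
      neg_mul, Finset.sum_add_distrib]
    rw [Finset.sum_ite_eq' Finset.univ (i.succ : Fin (m+1)) (fun k => M k j)]
    have hcond : ∀ k : Fin (m+1), ((k:ℕ)+1 = ((i.succ : Fin (m+1)):ℕ)) ↔ k = i.castSucc := by
      intro k
      simp [Fin.ext_iff]
    simp only [hcond]
    rw [Finset.sum_ite_eq' Finset.univ (i.castSucc : Fin (m+1)) (fun k => -(u * M k j))]
    simp only [Finset.mem_univ, if_true]
    ring
  have hmulR0 : ∀ (M : Matrix (Fin (m+1)) (Fin (m+1)) ℝ) (i : Fin (m+1)),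
      (M * Rᵀ) i 0 = M i 0 := by
    intro M i
    simp only [Matrix.mul_apply, Matrix.transpose_apply, hRdef, Matrix.of_apply, mul_add,
      mul_ite, mul_one, mul_zero, Finset.sum_add_distrib]
    rw [Finset.sum_ite_eq' Finset.univ (0 : Fin (m+1)) (fun k => M i k)]
    simp
  have hmulRs : ∀ (M : Matrix (Fin (m+1)) (Fin (m+1)) ℝ) (i : Fin (m+1)) (j : Fin m),
      (M * Rᵀ) i j.succ = M i j.succ - u * M i j.castSucc := by
    intro M i j
    simp only [Matrix.mul_apply, Matrix.transpose_apply, hRdef, Matrix.of_apply, mul_add,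
      mul_ite, mul_one, mul_zero, Finset.sum_add_distrib]
    rw [Finset.sum_ite_eq' Finset.univ (j.succ : Fin (m+1)) (fun k => M i k)]
    have hcond : ∀ k : Fin (m+1), ((k:ℕ)+1 = ((j.succ : Fin (m+1)):ℕ)) ↔ k = j.castSucc := by
      intro k
      simp [Fin.ext_iff]
    simp only [hcond]
    rw [Finset.sum_ite_eq' Finset.univ (j.castSucc : Fin (m+1)) (fun k => M i k * -u)]
    simp only [Finset.mem_univ, if_true]
    ring
  set T : (ℕ → ℝ) → Matrix (Fin (m+1)) (Fin (m+1)) ℝ :=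
    fun ν => R * (Matrix.of fun i j : Fin (m+1) => ν ((i:ℕ)+(j:ℕ))) * Rᵀ with hTdef
  have hT00 : ∀ ν, T ν 0 0 = ν 0 := by
    intro ν
    simp only [hTdef]
    rw [hmulR0, hmulL0]
    simp
  have hT0s : ∀ ν (j : Fin m), T ν 0 j.succ = ν ((j:ℕ)+1) - u * ν (j:ℕ) := by
    intro ν j
    simp only [hTdef]
    rw [hmulRs, hmulL0, hmulL0]
    simp
  have hTs0 : ∀ ν (i : Fin m), T ν i.succ 0 = ν ((i:ℕ)+1) - u * ν (i:ℕ) := by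
    intro ν i
    simp only [hTdef]
    rw [hmulR0, hmulLs]
    simp
  have hTss : ∀ ν (i j : Fin m), T ν i.succ j.succ =
      ν ((i:ℕ)+(j:ℕ)+2) - 2*u*ν ((i:ℕ)+(j:ℕ)+1) + u^2 * ν ((i:ℕ)+(j:ℕ)) := by
    intro ν i j
    simp only [hTdef]
    rw [hmulRs, hmulLs, hmulLs]
    simp only [Matrix.of_apply, Fin.val_succ, Fin.coe_castSucc]
    have e1 : (i:ℕ)+1+((j:ℕ)+1) = (i:ℕ)+(j:ℕ)+2 := by omega
    have e2 : (i:ℕ)+((j:ℕ)+1) = (i:ℕ)+(j:ℕ)+1 := by omega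
    have e3 : (i:ℕ)+1+(j:ℕ) = (i:ℕ)+(j:ℕ)+1 := by omega
    rw [e1, e2, e3]
    ring
  set ν : ℕ → ℝ := fun k => μ k + c * u ^ k with hνdef
  set w : Fin (m+1) → ℝ := Pi.single 0 1 with hwdef
  have hB : T ν = (T μ).updateRow 0 ((T μ) 0 + c • w) := by
    ext i j
    refine Fin.cases ?_ (fun i' => ?_) i
    · rw [Matrix.updateRow_self]
      refine Fin.cases ?_ (fun j' => ?_) j
      · rw [Pi.add_apply, hT00, hT00]
        simp [hνdef, hwdef, Pi.single_apply]
      · rw [Pi.add_apply, hT0s, hT0s]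
        simp only [hνdef, hwdef, Pi.smul_apply, Pi.single_apply, smul_eq_mul]
        rw [if_neg (Fin.succ_ne_zero j')]
        rw [pow_succ]
        ring
    · rw [Matrix.updateRow_ne (Fin.succ_ne_zero i')]
      refine Fin.cases ?_ (fun j' => ?_) j
      · rw [hTs0, hTs0]
        simp only [hνdef]
        rw [pow_succ]
        ring
      · rw [hTss, hTss]
        simp only [hνdef]
        rw [pow_succ, pow_succ, pow_succ]
        ring
  have hdetT : ∀ ν' : ℕ → ℝ,
      (T ν').det = (Matrix.of fun i j : Fin (m+1) => ν' ((i:ℕ)+(j:ℕ))).det := by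
    intro ν'
    simp only [hTdef]
    rw [Matrix.det_mul, Matrix.det_mul, Matrix.det_transpose, hRdet]
    ring
  have hsub : ((T μ).updateRow 0 w).submatrix Fin.succ Fin.succ
      = (T μ).submatrix Fin.succ Fin.succ := by
    ext i j
    simp only [Matrix.submatrix_apply]
    rw [Matrix.updateRow_ne (Fin.succ_ne_zero i)]
  have hsingle : ((T μ).updateRow 0 w).det
      = ((T μ).submatrix Fin.succ Fin.succ).det := by
    rw [Matrix.det_succ_row_zero, Fin.sum_univ_succ]
    have hz : ∀ j : Fin m, ((T μ).updateRow 0 w) 0 j.succ = 0 := by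
      intro j
      rw [Matrix.updateRow_self, hwdef, Pi.single_apply, if_neg (Fin.succ_ne_zero j)]
    have h1 : ((T μ).updateRow 0 w) 0 0 = 1 := by
      rw [Matrix.updateRow_self, hwdef]
      exact Pi.single_eq_same _ _
    rw [Finset.sum_eq_zero (fun j _ => by rw [hz j, mul_zero, zero_mul]), add_zero, h1,
      Fin.succAbove_zero, hsub]
    simp
  have key : (T ν).det = (T μ).det + c * ((T μ).submatrix Fin.succ Fin.succ).det := by
    rw [hB, Matrix.det_updateRow_add, Matrix.updateRow_eq_self, Matrix.det_updateRow_smul,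
      hsingle]
  have hfinal : (T μ).submatrix Fin.succ Fin.succ
      = Matrix.of fun i j : Fin m =>
        μ ((i:ℕ)+(j:ℕ)+2) - 2*u*μ ((i:ℕ)+(j:ℕ)+1) + u^2 * μ ((i:ℕ)+(j:ℕ)) := by
    ext i j
    simp only [Matrix.submatrix_apply, Matrix.of_apply]
    exact hTss μ i j
  calc (Matrix.of fun i j : Fin (m+1) => μ ((i:ℕ)+(j:ℕ)) + c * u^((i:ℕ)+(j:ℕ))).det
      = (T ν).det := (hdetT ν).symm
    _ = (T μ).det + c * ((T μ).submatrix Fin.succ Fin.succ).det := key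
    _ = _ := by rw [hdetT μ, hfinal]

/-- addition formula for moment determinants: for a weight ρ on ℝ with
all moments finite, `u c : ℝ`, and `n ≥ 1`,
`det(μ_{i+j} + c u^{i+j})_{n×n} = det(μ_{i+j})_{n×n} + c · det(moments of (z-u)²ρ)_{(n-1)×(n-1)}`. -/
theorem stmt4 (n : ℕ) (hn : 1 ≤ n) (ρ : ℝ → ℝ) (u c : ℝ)
    (hint : ∀ k : ℕ, Integrable (fun z : ℝ => z ^ k * ρ z)) :
    Matrix.det (Matrix.of fun i j : Fin n =>
        (∫ z : ℝ, z ^ ((i : ℕ) + (j : ℕ)) * ρ z) + c * u ^ ((i : ℕ) + (j : ℕ))) =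
      Matrix.det (Matrix.of fun i j : Fin n =>
        ∫ z : ℝ, z ^ ((i : ℕ) + (j : ℕ)) * ρ z) +
      c * Matrix.det (Matrix.of fun i j : Fin (n - 1) =>
        ∫ z : ℝ, z ^ ((i : ℕ) + (j : ℕ)) * (z - u) ^ 2 * ρ z) := by
  obtain ⟨m, rfl⟩ : ∃ m, n = m + 1 := ⟨n - 1, (Nat.succ_pred_eq_of_pos hn).symm⟩
  set μ : ℕ → ℝ := fun k => ∫ z : ℝ, z ^ k * ρ z with hμ
  have hmom : ∀ k : ℕ, (∫ z : ℝ, z ^ k * (z - u) ^ 2 * ρ z)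
      = μ (k+2) - 2*u*μ (k+1) + u^2 * μ k := by
    intro k
    have heq : ∀ z : ℝ, z ^ k * (z - u) ^ 2 * ρ z
        = z ^ (k+2) * ρ z - 2*u*(z^(k+1) * ρ z) + u^2 * (z^k * ρ z) := by
      intro z
      rw [pow_succ, pow_succ]
      ring
    simp only [heq]
    have h1 : Integrable (fun z : ℝ => z^(k+2)*ρ z - 2*u*(z^(k+1)*ρ z)) :=
      (hint (k+2)).sub ((hint (k+1)).const_mul (2*u))
    have h2 : Integrable (fun z : ℝ => u^2 * (z^k*ρ z)) := (hint k).const_mul (u^2)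
    rw [integral_add h1 h2, integral_sub (hint (k+2)) ((hint (k+1)).const_mul (2*u)),
      integral_const_mul, integral_const_mul]
  simp only [hmom]
  exact hankel_aux m μ u c
end

section
/- Let ρ_0, ρ_1, ... be a generalized m-periodic sequence of weights: z^m ρ_j ∈ span{ρ_0,...,ρ_{m+j}} with the coefficient of ρ_{m+j} nonzero, for all j ≥ 0. Let p_n be the associated monic orthogonal polynomials (⟨p_n, ρ_j⟩ = 0 for j < n, assuming all moment determinants D_n ≠ 0). Then z^m p_n(z) ∈ span{p_{n-m}, p_{n-m+1}, ..., p_{n+m}}; i.e., the matrix L defined by z^m p(z) = L p(z) is a (2m+1)-band matrix with m bands on each side of the diagonal. -/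
open Polynomial

noncomputable section Stmt6Aux

namespace Stmt6

/-- The pairing `⟨q, ρ_j⟩ = ∑ i, q_i μ_{ij}` as a linear map. -/
def B (μ : ℕ → ℕ → ℝ) (j : ℕ) : Polynomial ℝ →ₗ[ℝ] ℝ where
  toFun q := q.sum fun i a => a * μ i j
  map_add' p q := Polynomial.sum_add_index p q _ (fun _ => zero_mul _) (fun _ a b => add_mul a b _)
  map_smul' r q := by
    simp only [RingHom.id_apply, smul_eq_mul]
    rw [Polynomial.sum_smul_index q r (fun i a => a * μ i j) (fun i => zero_mul _)]
    rw [Polynomial.sum_def, Polynomial.sum_def, Finset.mul_sum]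
    exact Finset.sum_congr rfl fun i _ => by ring

lemma B_monomial (μ : ℕ → ℕ → ℝ) (j i : ℕ) (a : ℝ) :
    B μ j (Polynomial.monomial i a) = a * μ i j := by
  show ((Polynomial.monomial i a).sum fun i a => a * μ i j) = a * μ i j
  exact Polynomial.sum_monomial_index a _ (zero_mul _)

lemma B_X_pow (μ : ℕ → ℕ → ℝ) (j i : ℕ) : B μ j (Polynomial.X ^ i) = μ i j := by
  rw [Polynomial.X_pow_eq_monomial, B_monomial, one_mul]

lemma B_C_mul_X_pow (μ : ℕ → ℕ → ℝ) (j i : ℕ) (a : ℝ) :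
    B μ j (Polynomial.C a * Polynomial.X ^ i) = a * μ i j := by
  rw [Polynomial.C_mul_X_pow_eq_monomial, B_monomial]

lemma B_C_mul (μ : ℕ → ℕ → ℝ) (j : ℕ) (a : ℝ) (q : Polynomial ℝ) :
    B μ j (Polynomial.C a * q) = a * B μ j q := by
  rw [← Polynomial.smul_eq_C_mul, map_smul, smul_eq_mul]

end Stmt6

end Stmt6Aux
namespace Stmt6

variable (μ : ℕ → ℕ → ℝ)

/-- The moment determinant `D_n`. -/
def Dn (n : ℕ) : ℝ := Matrix.det (Matrix.of fun i j : Fin n => μ i j)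

/-- The minor matrix obtained by deleting row `i` and the last column. -/
def Nmat (n : ℕ) (i : Fin (n + 1)) : Matrix (Fin n) (Fin n) ℝ :=
  Matrix.of fun i' j' => μ (i.succAbove i') j'

lemma det_polymat (n : ℕ) :
    Matrix.det (Matrix.of fun i j : Fin (n + 1) =>
        if _ : (j : ℕ) < n then Polynomial.C (μ i j) else Polynomial.X ^ (i : ℕ)) =
    ∑ i : Fin (n + 1),
      Polynomial.C ((-1) ^ ((i : ℕ) + n) * (Nmat μ n i).det) * Polynomial.X ^ (i : ℕ) := by
  rw [Matrix.det_succ_column _ (Fin.last n)]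
  refine Finset.sum_congr rfl fun i _ => ?_
  have h1 : (Matrix.of fun i j : Fin (n + 1) =>
      if _ : (j : ℕ) < n then Polynomial.C (μ i j) else Polynomial.X ^ (i : ℕ)) i (Fin.last n)
      = Polynomial.X ^ (i : ℕ) := by simp
  have h2 : ((Matrix.of fun i j : Fin (n + 1) =>
      if _ : (j : ℕ) < n then Polynomial.C (μ i j) else Polynomial.X ^ (i : ℕ)).submatrix
        i.succAbove (Fin.last n).succAbove) = (Nmat μ n i).map Polynomial.C := by
    ext i' j'
    have : ((Fin.last n).succAbove j' : ℕ) < n := by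
      rw [Fin.succAbove_last]; exact j'.isLt
    simp [Matrix.submatrix, this, Nmat, Fin.succAbove_last]
  have h4 : ((Nmat μ n i).map ⇑(Polynomial.C : ℝ →+* Polynomial ℝ)).det
      = Polynomial.C (Nmat μ n i).det := by
    rw [(Polynomial.C : ℝ →+* Polynomial ℝ).map_det, RingHom.mapMatrix_apply]
  rw [h1, h2, h4]
  have h3 : ((Fin.last n : Fin (n + 1)) : ℕ) = n := rfl
  rw [h3, map_mul, map_pow, map_neg, map_one]
  ring

end Stmt6
namespace Stmt6

variable (μ : ℕ → ℕ → ℝ)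

/-- `p_n` given by the determinant formula, in expanded form. -/
noncomputable def pdet (n : ℕ) : Polynomial ℝ :=
  Polynomial.C (Dn μ n)⁻¹ *
    ∑ i : Fin (n + 1),
      Polynomial.C ((-1) ^ ((i : ℕ) + n) * (Nmat μ n i).det) * Polynomial.X ^ (i : ℕ)

/-- The moment matrix with the last column replaced by the `j`-th moments. -/
def Mmat (n j : ℕ) : Matrix (Fin (n + 1)) (Fin (n + 1)) ℝ :=
  Matrix.of fun i k => if (k : ℕ) < n then μ i k else μ i j

lemma Nmat_last (n : ℕ) : Nmat μ n (Fin.last n) = Matrix.of fun i j : Fin n => μ i j := by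
  ext i' j'
  simp [Nmat, Fin.succAbove_last]

lemma coeff_pdet (n k : ℕ) :
    (pdet μ n).coeff k = (Dn μ n)⁻¹ *
      ∑ i : Fin (n + 1),
        (if k = (i : ℕ) then (-1) ^ ((i : ℕ) + n) * (Nmat μ n i).det else 0) := by
  rw [pdet, Polynomial.coeff_C_mul, Polynomial.finset_sum_coeff]
  congr 1
  refine Finset.sum_congr rfl fun i _ => ?_
  rw [Polynomial.coeff_C_mul, Polynomial.coeff_X_pow]
  split <;> simp

lemma natDegree_pdet_le (n : ℕ) : (pdet μ n).natDegree ≤ n := by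
  rw [Polynomial.natDegree_le_iff_coeff_eq_zero]
  intro N hN
  rw [coeff_pdet]
  have : ∀ i : Fin (n + 1),
      (if N = (i : ℕ) then (-1 : ℝ) ^ ((i : ℕ) + n) * (Nmat μ n i).det else 0) = 0 := by
    intro i
    have : N ≠ (i : ℕ) := by omega
    simp [this]
  rw [Finset.sum_congr rfl fun i _ => this i]
  simp

lemma coeff_pdet_self (n : ℕ) (hDn : Dn μ n ≠ 0) : (pdet μ n).coeff n = 1 := by
  rw [coeff_pdet]
  rw [Finset.sum_eq_single (Fin.last n)]
  · have h1 : n = ((Fin.last n : Fin (n + 1)) : ℕ) := rfl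
    rw [if_pos h1, Nmat_last]
    have h2 : ((Fin.last n : Fin (n + 1)) : ℕ) + n = 2 * n := by
      simp [Fin.val_last]; ring
    rw [h2, pow_mul]
    norm_num
    rw [← Dn]
    field_simp
  · intro b _ hb
    have : n ≠ (b : ℕ) := by
      intro h
      exact hb (Fin.ext h.symm)
    simp [this]
  · intro h
    exact absurd (Finset.mem_univ _) h

lemma B_pdet (n j : ℕ) : B μ j (pdet μ n) = (Dn μ n)⁻¹ * (Mmat μ n j).det := by
  rw [pdet, B_C_mul, map_sum]
  congr 1
  rw [Matrix.det_succ_column (Mmat μ n j) (Fin.last n)]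
  refine Finset.sum_congr rfl fun i _ => ?_
  rw [B_C_mul_X_pow]
  have h1 : Mmat μ n j i (Fin.last n) = μ i j := by
    simp [Mmat, Fin.val_last]
  have h2 : (Mmat μ n j).submatrix i.succAbove (Fin.last n).succAbove = Nmat μ n i := by
    ext i' j'
    have : ((Fin.last n).succAbove j' : ℕ) < n := by
      rw [Fin.succAbove_last]; exact j'.isLt
    simp [Mmat, Nmat, Matrix.submatrix, this, Fin.succAbove_last]
  rw [h1, h2]
  have h3 : ((Fin.last n : Fin (n + 1)) : ℕ) = n := rfl
  rw [h3]
  ring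

lemma B_pdet_eq_zero (n j : ℕ) (hj : j < n) : B μ j (pdet μ n) = 0 := by
  rw [B_pdet]
  have hcol : (Mmat μ n j).det = 0 := by
    refine Matrix.det_zero_of_column_eq (i := (⟨j, by omega⟩ : Fin (n + 1)))
      (j := Fin.last n) ?_ ?_
    · intro h
      have := congrArg Fin.val h
      simp [Fin.val_last] at this
      omega
    · intro k
      simp [Mmat, Fin.val_last, hj]
  rw [hcol, mul_zero]

lemma B_pdet_self (n : ℕ) : B μ n (pdet μ n) = (Dn μ n)⁻¹ * Dn μ (n + 1) := by
  rw [B_pdet]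
  congr 1
  have : Mmat μ n n = Matrix.of fun i j : Fin (n + 1) => μ i j := by
    ext i k
    by_cases h : (k : ℕ) < n
    · simp [Mmat, h]
    · have hk : (k : ℕ) = n := by have := k.isLt; omega
      simp [Mmat, h, hk]
  rw [this, Dn]

end Stmt6
namespace Stmt6

variable (μ : ℕ → ℕ → ℝ)

lemma exists_repr (P : ℕ → Polynomial ℝ) (hdeg : ∀ k, (P k).natDegree ≤ k)
    (hlead : ∀ k, (P k).coeff k = 1) :
    ∀ N (q : Polynomial ℝ), q.natDegree ≤ N →
      ∃ e : ℕ → ℝ, q = ∑ k ∈ Finset.range (N + 1), Polynomial.C (e k) * P k := by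
  intro N
  induction N with
  | zero =>
    intro q hq
    refine ⟨fun _ => q.coeff 0, ?_⟩
    have hP0 : P 0 = 1 := by
      calc P 0 = Polynomial.C ((P 0).coeff 0) := Polynomial.eq_C_of_natDegree_le_zero (hdeg 0)
        _ = 1 := by rw [hlead 0, map_one]
    rw [Finset.sum_range_one, hP0, mul_one]
    exact Polynomial.eq_C_of_natDegree_le_zero hq
  | succ N ih =>
    intro q hq
    set a := q.coeff (N + 1) with ha
    have hr : (q - Polynomial.C a * P (N + 1)).natDegree ≤ N := by
      rw [Polynomial.natDegree_le_iff_coeff_eq_zero]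
      intro M hM
      rw [Polynomial.coeff_sub, Polynomial.coeff_C_mul]
      rcases eq_or_lt_of_le (Nat.succ_le_of_lt hM) with h | h
      · rw [← h, ← ha, hlead, mul_one, sub_self]
      · have h1 : q.coeff M = 0 :=
          Polynomial.coeff_eq_zero_of_natDegree_lt (lt_of_le_of_lt hq h)
        have h2 : (P (N + 1)).coeff M = 0 :=
          Polynomial.coeff_eq_zero_of_natDegree_lt (lt_of_le_of_lt (hdeg _) h)
        rw [h1, h2, mul_zero, sub_zero]
    obtain ⟨e', he'⟩ := ih _ hr
    refine ⟨fun k => if k = N + 1 then a else e' k, ?_⟩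
    rw [Finset.sum_range_succ]
    have hcong : ∑ k ∈ Finset.range (N + 1),
          Polynomial.C (if k = N + 1 then a else e' k) * P k
        = ∑ k ∈ Finset.range (N + 1), Polynomial.C (e' k) * P k := by
      refine Finset.sum_congr rfl fun k hk => ?_
      rw [Finset.mem_range] at hk
      rw [if_neg (by omega)]
    rw [hcong, ← he']
    simp only [if_pos rfl]
    exact (sub_add_cancel q _).symm

lemma coeff_vanish (P : ℕ → Polynomial ℝ) (Bv : ℕ → Polynomial ℝ →ₗ[ℝ] ℝ)
    (horth : ∀ j k, j < k → Bv j (P k) = 0)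
    (hdiag : ∀ j, Bv j (P j) ≠ 0)
    (N : ℕ) (e : ℕ → ℝ) (q : Polynomial ℝ)
    (hq : q = ∑ k ∈ Finset.range (N + 1), Polynomial.C (e k) * P k)
    (t : ℕ) (ht : t ≤ N + 1) (hBq : ∀ j, j < t → Bv j q = 0) :
    ∀ j, j < t → e j = 0 := by
  intro j
  induction j using Nat.strong_induction_on with
  | _ j ih =>
    intro hjt
    have hBj : Bv j q = 0 := hBq j hjt
    rw [hq, map_sum] at hBj
    have hterm : ∀ k ∈ Finset.range (N + 1),
        Bv j (Polynomial.C (e k) * P k) = if k = j then e j * Bv j (P j) else 0 := by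
      intro k _
      rw [← Polynomial.smul_eq_C_mul, map_smul, smul_eq_mul]
      by_cases hkj : k = j
      · rw [if_pos hkj, hkj]
      · rw [if_neg hkj]
        rcases Nat.lt_or_ge j k with h | h
        · rw [horth j k h, mul_zero]
        · have hkj' : k < j := by omega
          rw [ih k hkj' (by omega), zero_mul]
    rw [Finset.sum_congr rfl hterm,
      Finset.sum_ite_eq' (Finset.range (N + 1)) j (fun _ => e j * Bv j (P j)),
      if_pos (Finset.mem_range.mpr (by omega))] at hBj
    exact (mul_eq_zero.mp hBj).resolve_right (hdiag j)

lemma B_X_pow_mul (m : ℕ) (c : ℕ → ℕ → ℝ)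
    (hc : ∀ i j : ℕ, μ (m + i) j = ∑ r ∈ Finset.range (m + j + 1), c j r * μ i r)
    (j : ℕ) (q : Polynomial ℝ) :
    B μ j (Polynomial.X ^ m * q) = ∑ r ∈ Finset.range (m + j + 1), c j r * B μ r q := by
  induction q using Polynomial.induction_on' with
  | add p q hp hq =>
    rw [mul_add, map_add, hp, hq, ← Finset.sum_add_distrib]
    refine Finset.sum_congr rfl fun r _ => ?_
    rw [map_add]; ring
  | monomial i a =>
    rw [Polynomial.X_pow_eq_monomial, Polynomial.monomial_mul_monomial, one_mul, B_monomial,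
      hc i j, Finset.mul_sum]
    refine Finset.sum_congr rfl fun r _ => ?_
    rw [B_monomial]
    ring

end Stmt6

/-- If the moments `μ_{ij} = ⟨z^i, ρ_j⟩` come from a generalized m-periodic
sequence of weights, i.e. `μ_{m+i,j} = Σ_{r=0}^{m+j} c_{jr} μ_{ir}` with `c_{j,m+j} ≠ 0`
(encoding `z^m ρ_j = Σ_{r≤m+j} c_{jr} ρ_r`), and all moment determinants are nonzero,
then the monic orthogonal polynomials `p_n` defined by the determinant formula satisfy
`z^m p_n ∈ span{p_{n-m}, …, p_{n+m}}` (with `p_k := 0` for `k < 0`): the matrix `L`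
with `z^m p = L p` is a (2m+1)-band matrix. -/
theorem stmt6 (m : ℕ) (hm : 1 ≤ m) (μ : ℕ → ℕ → ℝ)
    (hD : ∀ k : ℕ, Matrix.det (Matrix.of fun i j : Fin k => μ i j) ≠ 0)
    (c : ℕ → ℕ → ℝ)
    (hc : ∀ i j : ℕ, μ (m + i) j = ∑ r ∈ Finset.range (m + j + 1), c j r * μ i r)
    (hctop : ∀ j : ℕ, c j (m + j) ≠ 0)
    (p : ℕ → Polynomial ℝ)
    (hp : ∀ n : ℕ, p n =
      Polynomial.C (Matrix.det (Matrix.of fun i j : Fin n => μ i j))⁻¹ *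
        Matrix.det (Matrix.of fun i j : Fin (n + 1) =>
          if h : (j : ℕ) < n then Polynomial.C (μ i j) else Polynomial.X ^ (i : ℕ))) :
    ∀ n : ℕ, ∃ d : ℕ → ℝ,
      Polynomial.X ^ m * p n =
        ∑ k ∈ Finset.range (2 * m + 1),
          Polynomial.C (d k) * (if m ≤ n + k then p (n + k - m) else 0) := by
  intro n
  have hD' : ∀ k, Stmt6.Dn μ k ≠ 0 := hD
  have hped : ∀ k, p k = Stmt6.pdet μ k := by
    intro k
    rw [hp k, Stmt6.det_polymat]
    rfl
  have hdeg : ∀ k, (p k).natDegree ≤ k := fun k => by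
    rw [hped k]; exact Stmt6.natDegree_pdet_le μ k
  have hlead : ∀ k, (p k).coeff k = 1 := fun k => by
    rw [hped k]; exact Stmt6.coeff_pdet_self μ k (hD' k)
  have horth : ∀ j k, j < k → Stmt6.B μ j (p k) = 0 := fun j k hjk => by
    rw [hped k]; exact Stmt6.B_pdet_eq_zero μ k j hjk
  have hdiag : ∀ j, Stmt6.B μ j (p j) ≠ 0 := fun j => by
    rw [hped j, Stmt6.B_pdet_self]
    exact mul_ne_zero (inv_ne_zero (hD' j)) (hD' (j + 1))
  -- decompose X^m * p n over p 0, ..., p (n+m)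
  have hqdeg : (Polynomial.X ^ m * p n).natDegree ≤ n + m := by
    refine (Polynomial.natDegree_mul_le).trans ?_
    rw [Polynomial.natDegree_X_pow]
    have := hdeg n
    omega
  obtain ⟨e, he⟩ := Stmt6.exists_repr p hdeg hlead (n + m) _ hqdeg
  -- coefficients below n - m vanish
  have hBq : ∀ j, j < n - m → Stmt6.B μ j (Polynomial.X ^ m * p n) = 0 := by
    intro j hj
    rw [Stmt6.B_X_pow_mul μ m c hc j]
    refine Finset.sum_eq_zero fun r hr => ?_
    rw [Finset.mem_range] at hr
    rw [horth r n (by omega), mul_zero]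
  have hvanish : ∀ j, j < n - m → e j = 0 :=
    Stmt6.coeff_vanish p (Stmt6.B μ) horth hdiag (n + m) e _ he (n - m) (by omega) hBq
  refine ⟨fun k => if m ≤ n + k then e (n + k - m) else 0, ?_⟩
  rw [he]
  have hRHS : ∑ k ∈ Finset.range (2 * m + 1),
        Polynomial.C (if m ≤ n + k then e (n + k - m) else 0) *
          (if m ≤ n + k then p (n + k - m) else 0)
      = ∑ k ∈ (Finset.range (2 * m + 1)).filter (fun k => m ≤ n + k),
          Polynomial.C (e (n + k - m)) * p (n + k - m) := by
    rw [Finset.sum_filter]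
    refine Finset.sum_congr rfl fun k _ => ?_
    by_cases h : m ≤ n + k <;> simp [h]
  rw [hRHS]
  have hL : ∑ k ∈ Finset.range (n + m + 1), Polynomial.C (e k) * p k
      = ∑ k ∈ (Finset.range (n + m + 1)).filter (fun k => n ≤ k + m),
          Polynomial.C (e k) * p k := by
    symm
    refine Finset.sum_subset (Finset.filter_subset _ _) ?_
    intro x hx hnx
    simp only [Finset.mem_filter, Finset.mem_range, not_and, not_le] at hx hnx
    rw [hvanish x (by omega)]
    simp
  rw [hL]
  refine Finset.sum_nbij' (fun k => k + m - n) (fun k => n + k - m) ?_ ?_ ?_ ?_ ?_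
  · intro a ha
    simp only [Finset.mem_filter, Finset.mem_range] at ha ⊢
    omega
  · intro a ha
    simp only [Finset.mem_filter, Finset.mem_range] at ha ⊢
    omega
  · intro a ha
    simp only [Finset.mem_filter, Finset.mem_range] at ha
    show n + (a + m - n) - m = a
    omega
  · intro a ha
    simp only [Finset.mem_filter, Finset.mem_range] at ha
    show n + a - m + m - n = a
    omega
  · intro a ha
    simp only [Finset.mem_filter, Finset.mem_range] at ha
    have : n + (a + m - n) - m = a := by omega
    rw [this]
end

section
/- If the semi-infinite moment matrix m_∞ admits a Borel (LU-type) factorization m_∞ = S_1^{-1} S_2 with S_1 lower unitriangular and S_2 upper triangular invertible, and if Λ^m m_∞ = m_∞ (Λ^T)^m where Λ is the shift matrix, then L_1^m = L_2^m, where L_1 := S_1 Λ S_1^{-1} and L_2 := S_2 Λ^T S_2^{-1}; consequently L := L_1^m is a (2m+1)-band matrix (its (i,j) entry vanishes whenever |i - j| > m). -/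
/-- Entrywise product of semi-infinite real matrices (the tsum is a finite sum for the
triangular/banded matrices considered here). -/
noncomputable def smul' (A B : ℕ → ℕ → ℝ) : ℕ → ℕ → ℝ := fun i j => ∑' k : ℕ, A i k * B k j

/-- Semi-infinite identity matrix. -/
def idm : ℕ → ℕ → ℝ := fun i j => if i = j then 1 else 0

/-- Powers of a semi-infinite matrix. -/
noncomputable def spow (A : ℕ → ℕ → ℝ) : ℕ → (ℕ → ℕ → ℝ)
  | 0 => idm
  | n + 1 => smul' (spow A n) A

/-- The shift matrix Λ = (δ_{i,j-1}). -/
def shiftM : ℕ → ℕ → ℝ := fun i j => if j = i + 1 then 1 else 0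

/-- The transposed shift matrix Λᵀ = (δ_{i,j+1}). -/
def shiftT : ℕ → ℕ → ℝ := fun i j => if i = j + 1 then 1 else 0

/-! Auxiliary band-structure machinery -/

def LowB (b : ℕ) (A : ℕ → ℕ → ℝ) : Prop := ∀ i j : ℕ, i + b < j → A i j = 0

def UpB (b : ℕ) (A : ℕ → ℕ → ℝ) : Prop := ∀ i j : ℕ, j + b < i → A i j = 0

lemma LowB_mono {a b : ℕ} {A : ℕ → ℕ → ℝ} (h : a ≤ b) (hA : LowB a A) : LowB b A :=
  fun i j hij => hA i j (by omega)

lemma UpB_mono {a b : ℕ} {A : ℕ → ℕ → ℝ} (h : a ≤ b) (hA : UpB a A) : UpB b A :=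
  fun i j hij => hA i j (by omega)

lemma lowB_smul' {a b : ℕ} {A B : ℕ → ℕ → ℝ} (hA : LowB a A) (hB : LowB b B) :
    LowB (a + b) (smul' A B) := by
  intro i j hij
  have h : ∀ k : ℕ, A i k * B k j = 0 := by
    intro k
    rcases le_or_gt k (i + a) with hk | hk
    · rw [hB k j (by omega), mul_zero]
    · rw [hA i k hk, zero_mul]
  simp only [smul', h, tsum_zero]

lemma upB_smul' {a b : ℕ} {A B : ℕ → ℕ → ℝ} (hA : UpB a A) (hB : UpB b B) :
    UpB (a + b) (smul' A B) := by
  intro i j hij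
  have h : ∀ k : ℕ, A i k * B k j = 0 := by
    intro k
    rcases le_or_gt k (j + b) with hk | hk
    · rw [hA i k (by omega), zero_mul]
    · rw [hB k j hk, mul_zero]
  simp only [smul', h, tsum_zero]

lemma smul'_sum_lowB {a : ℕ} {A : ℕ → ℕ → ℝ} (hA : LowB a A) (B : ℕ → ℕ → ℝ) (i j : ℕ) :
    smul' A B i j = ∑ k ∈ Finset.range (i + a + 1), A i k * B k j := by
  show (∑' k : ℕ, A i k * B k j) = _
  apply tsum_eq_sum
  intro k hk
  simp only [Finset.mem_range, not_lt] at hk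
  rw [hA i k (by omega), zero_mul]

lemma smul'_sum_upB {c : ℕ} {C : ℕ → ℕ → ℝ} (hC : UpB c C) (B : ℕ → ℕ → ℝ) (i j : ℕ) :
    smul' B C i j = ∑ k ∈ Finset.range (j + c + 1), B i k * C k j := by
  show (∑' k : ℕ, B i k * C k j) = _
  apply tsum_eq_sum
  intro k hk
  simp only [Finset.mem_range, not_lt] at hk
  rw [hC k j (by omega), mul_zero]

lemma assoc_ll {a b : ℕ} {A B : ℕ → ℕ → ℝ} (hA : LowB a A) (hB : LowB b B) (C : ℕ → ℕ → ℝ) :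
    smul' (smul' A B) C = smul' A (smul' B C) := by
  funext i j
  have hAB : LowB (a + b) (smul' A B) := lowB_smul' hA hB
  have L : smul' (smul' A B) C i j =
      ∑ l ∈ Finset.range (i + (a + b) + 1),
        (∑ k ∈ Finset.range (i + a + 1), A i k * B k l) * C l j := by
    rw [smul'_sum_lowB hAB]
    exact Finset.sum_congr rfl fun l _ => by rw [smul'_sum_lowB hA]
  have R : smul' A (smul' B C) i j =
      ∑ k ∈ Finset.range (i + a + 1),
        A i k * ∑ l ∈ Finset.range (i + (a + b) + 1), B k l * C l j := by
    rw [smul'_sum_lowB hA]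
    refine Finset.sum_congr rfl fun k hk => ?_
    simp only [Finset.mem_range] at hk
    congr 1
    show (∑' l : ℕ, B k l * C l j) = _
    apply tsum_eq_sum
    intro l hl
    simp only [Finset.mem_range, not_lt] at hl
    rw [hB k l (by omega), zero_mul]
  rw [L, R]
  simp only [Finset.sum_mul, Finset.mul_sum, mul_assoc]
  exact Finset.sum_comm

lemma assoc_lu {a c : ℕ} {A C : ℕ → ℕ → ℝ} (hA : LowB a A) (hC : UpB c C) (B : ℕ → ℕ → ℝ) :
    smul' (smul' A B) C = smul' A (smul' B C) := by
  funext i j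
  have L : smul' (smul' A B) C i j =
      ∑ l ∈ Finset.range (j + c + 1),
        (∑ k ∈ Finset.range (i + a + 1), A i k * B k l) * C l j := by
    rw [smul'_sum_upB hC]
    exact Finset.sum_congr rfl fun l _ => by rw [smul'_sum_lowB hA]
  have R : smul' A (smul' B C) i j =
      ∑ k ∈ Finset.range (i + a + 1),
        A i k * ∑ l ∈ Finset.range (j + c + 1), B k l * C l j := by
    rw [smul'_sum_lowB hA]
    refine Finset.sum_congr rfl fun k _ => ?_
    congr 1
    show (∑' l : ℕ, B k l * C l j) = _
    apply tsum_eq_sum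
    intro l hl
    simp only [Finset.mem_range, not_lt] at hl
    rw [hC l j (by omega), mul_zero]
  rw [L, R]
  simp only [Finset.sum_mul, Finset.mul_sum, mul_assoc]
  exact Finset.sum_comm

def trM (A : ℕ → ℕ → ℝ) : ℕ → ℕ → ℝ := fun i j => A j i

lemma trM_smul' (A B : ℕ → ℕ → ℝ) : trM (smul' A B) = smul' (trM B) (trM A) := by
  funext i j
  simp only [trM, smul']
  exact tsum_congr fun k => mul_comm _ _

lemma lowB_trM {b : ℕ} {A : ℕ → ℕ → ℝ} (h : UpB b A) : LowB b (trM A) :=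
  fun i j hij => h j i hij

lemma assoc_uu {b c : ℕ} {B C : ℕ → ℕ → ℝ} (hB : UpB b B) (hC : UpB c C) (A : ℕ → ℕ → ℝ) :
    smul' (smul' A B) C = smul' A (smul' B C) := by
  have h := assoc_ll (lowB_trM hC) (lowB_trM hB) (trM A)
  have h1 : trM (smul' (smul' A B) C) = trM (smul' A (smul' B C)) := by
    rw [trM_smul', trM_smul', trM_smul', trM_smul', h]
  funext i j
  exact congrFun (congrFun h1 j) i

lemma smul'_idm (A : ℕ → ℕ → ℝ) : smul' A idm = A := by
  funext i j
  show (∑' k : ℕ, A i k * idm k j) = A i j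
  rw [tsum_eq_single j (fun k hk => by simp [idm, hk])]
  simp [idm]

lemma idm_smul' (A : ℕ → ℕ → ℝ) : smul' idm A = A := by
  funext i j
  show (∑' k : ℕ, idm i k * A k j) = A i j
  rw [tsum_eq_single i (fun k hk => by simp [idm, Ne.symm hk])]
  simp [idm]

lemma idm_lowB : LowB 0 idm := fun i j h => if_neg (by omega)

lemma idm_upB : UpB 0 idm := fun i j h => if_neg (by omega)

lemma shiftM_lowB : LowB 1 shiftM := fun i j h => by
  simp only [shiftM, if_neg (by omega : ¬ j = i + 1)]

lemma shiftT_upB : UpB 1 shiftT := fun i j h => by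
  simp only [shiftT, if_neg (by omega : ¬ i = j + 1)]

lemma lowB_spow {A : ℕ → ℕ → ℝ} (hA : LowB 1 A) : ∀ n : ℕ, LowB n (spow A n)
  | 0 => idm_lowB
  | n + 1 => LowB_mono (by omega) (lowB_smul' (lowB_spow hA n) hA)

lemma upB_spow {A : ℕ → ℕ → ℝ} (hA : UpB 1 A) : ∀ n : ℕ, UpB n (spow A n)
  | 0 => idm_upB
  | n + 1 => UpB_mono (by omega) (upB_smul' (upB_spow hA n) hA)

lemma key1 (S1 T1 : ℕ → ℕ → ℝ) (hS1 : LowB 0 S1) (hT1b : LowB 0 T1)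
    (hT1 : smul' S1 T1 = idm) (hT1' : smul' T1 S1 = idm) :
    ∀ n : ℕ, spow (smul' (smul' S1 shiftM) T1) n = smul' (smul' S1 (spow shiftM n)) T1 := by
  intro n
  induction n with
  | zero =>
    show idm = smul' (smul' S1 idm) T1
    rw [smul'_idm, hT1]
  | succ n ih =>
    have hΛ : LowB 1 shiftM := shiftM_lowB
    have hPn : LowB n (spow shiftM n) := lowB_spow hΛ n
    have hSΛ : LowB 1 (smul' S1 shiftM) := LowB_mono (by omega) (lowB_smul' hS1 hΛ)
    show smul' (spow (smul' (smul' S1 shiftM) T1) n) (smul' (smul' S1 shiftM) T1)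
        = smul' (smul' S1 (spow shiftM (n + 1))) T1
    rw [ih]
    have step1 : smul' T1 (smul' (smul' S1 shiftM) T1) = smul' shiftM T1 := by
      rw [← assoc_ll hT1b hSΛ, ← assoc_ll hT1b hS1, hT1', idm_smul']
    rw [assoc_ll (lowB_smul' hS1 hPn) hT1b, step1,
        ← assoc_ll (lowB_smul' hS1 hPn) hΛ, assoc_ll hS1 hPn]
    rfl

lemma key2 (S2 T2 : ℕ → ℕ → ℝ) (hS2 : UpB 0 S2) (hT2b : UpB 0 T2)
    (hT2 : smul' S2 T2 = idm) (hT2' : smul' T2 S2 = idm) :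
    ∀ n : ℕ, spow (smul' (smul' S2 shiftT) T2) n = smul' (smul' S2 (spow shiftT n)) T2 := by
  intro n
  induction n with
  | zero =>
    show idm = smul' (smul' S2 idm) T2
    rw [smul'_idm, hT2]
  | succ n ih =>
    have hΛT : UpB 1 shiftT := shiftT_upB
    have hQn : UpB n (spow shiftT n) := upB_spow hΛT n
    have hSΛ : UpB 1 (smul' S2 shiftT) := UpB_mono (by omega) (upB_smul' hS2 hΛT)
    have hL2 : UpB 1 (smul' (smul' S2 shiftT) T2) :=
      UpB_mono (by omega) (upB_smul' hSΛ hT2b)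
    show smul' (spow (smul' (smul' S2 shiftT) T2) n) (smul' (smul' S2 shiftT) T2)
        = smul' (smul' S2 (spow shiftT (n + 1))) T2
    rw [ih]
    have step1 : smul' T2 (smul' (smul' S2 shiftT) T2) = smul' shiftT T2 := by
      rw [← assoc_uu hSΛ hT2b T2, ← assoc_uu hS2 hΛT T2, hT2', idm_smul']
    rw [assoc_uu hT2b hL2 (smul' S2 (spow shiftT n)), step1,
        ← assoc_uu hΛT hT2b (smul' S2 (spow shiftT n)), assoc_uu hQn hΛT S2]
    rfl

/-- If `m_∞ = S₁⁻¹ S₂` is a Borel factorization (S₁ lower unitriangular with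
inverse T₁, S₂ upper triangular invertible with inverse T₂) and `Λ^m m_∞ = m_∞ (Λᵀ)^m`,
then `L₁^m = L₂^m` for `L₁ = S₁ Λ S₁⁻¹`, `L₂ = S₂ Λᵀ S₂⁻¹`, and `L := L₁^m` is a
(2m+1)-band matrix. -/
theorem stmt7 (m : ℕ) (minf S1 S2 T1 T2 : ℕ → ℕ → ℝ)
    (hS1low : ∀ i j : ℕ, i < j → S1 i j = 0) (hS1diag : ∀ i : ℕ, S1 i i = 1)
    (hT1low : ∀ i j : ℕ, i < j → T1 i j = 0)
    (hT1 : smul' S1 T1 = idm) (hT1' : smul' T1 S1 = idm)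
    (hS2up : ∀ i j : ℕ, j < i → S2 i j = 0)
    (hT2up : ∀ i j : ℕ, j < i → T2 i j = 0)
    (hT2 : smul' S2 T2 = idm) (hT2' : smul' T2 S2 = idm)
    (hfact : minf = smul' T1 S2)
    (hper : smul' (spow shiftM m) minf = smul' minf (spow shiftT m)) :
    spow (smul' (smul' S1 shiftM) T1) m = spow (smul' (smul' S2 shiftT) T2) m ∧
    (∀ i j : ℕ, (m : ℤ) < |(i : ℤ) - (j : ℤ)| →
      spow (smul' (smul' S1 shiftM) T1) m i j = 0) := by
  have hS1b : LowB 0 S1 := fun i j h => hS1low i j (by omega)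
  have hT1b : LowB 0 T1 := fun i j h => hT1low i j (by omega)
  have hS2b : UpB 0 S2 := fun i j h => hS2up i j (by omega)
  have hT2b : UpB 0 T2 := fun i j h => hT2up i j (by omega)
  have hΛ : LowB 1 shiftM := shiftM_lowB
  have hΛT : UpB 1 shiftT := shiftT_upB
  have hPm : LowB m (spow shiftM m) := lowB_spow hΛ m
  have hQm : UpB m (spow shiftT m) := upB_spow hΛT m
  have hQT : UpB (m + 0) (smul' (spow shiftT m) T2) := upB_smul' hQm hT2b
  -- the middle chain : Λ^m T1 = T1 (S2 ((Λᵀ)^m T2))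
  have c2 : smul' (spow shiftM m) T1
      = smul' T1 (smul' S2 (smul' (spow shiftT m) T2)) := by
    calc smul' (spow shiftM m) T1
        = smul' (spow shiftM m) (smul' (smul' T1 S2) T2) := by
          rw [assoc_uu hS2b hT2b T1, hT2, smul'_idm]
      _ = smul' (smul' (spow shiftM m) (smul' T1 S2)) T2 :=
          (assoc_lu hPm hT2b (smul' T1 S2)).symm
      _ = smul' (smul' (smul' T1 S2) (spow shiftT m)) T2 := by
          rw [← hfact, hper]
      _ = smul' (smul' T1 S2) (smul' (spow shiftT m) T2) := assoc_uu hQm hT2b _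
      _ = smul' T1 (smul' S2 (smul' (spow shiftT m) T2)) := assoc_uu hS2b hQT T1
  have main : smul' (smul' S1 (spow shiftM m)) T1 = smul' (smul' S2 (spow shiftT m)) T2 := by
    rw [assoc_ll hS1b hPm, c2, ← assoc_ll hS1b hT1b, hT1, idm_smul',
      ← assoc_uu hQm hT2b S2]
  have heq : spow (smul' (smul' S1 shiftM) T1) m = spow (smul' (smul' S2 shiftT) T2) m := by
    rw [key1 S1 T1 hS1b hT1b hT1 hT1' m, key2 S2 T2 hS2b hT2b hT2 hT2' m, main]
  refine ⟨heq, ?_⟩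
  intro i j hij
  have hL1 : LowB 1 (smul' (smul' S1 shiftM) T1) :=
    LowB_mono (by omega) (lowB_smul' (lowB_smul' hS1b hΛ) hT1b)
  have hL2 : UpB 1 (smul' (smul' S2 shiftT) T2) :=
    UpB_mono (by omega) (upB_smul' (upB_smul' hS2b hΛT) hT2b)
  rcases lt_or_ge (i + m) j with h | h
  · exact lowB_spow hL1 m i j h
  · have h2 : j + m < i := by
      rcases abs_cases ((i : ℤ) - (j : ℤ)) with ⟨he, _⟩ | ⟨he, _⟩ <;> omega
    rw [heq]
    exact upB_spow hL2 m i j h2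
end

section
/- Let L be a semi-infinite lower Hessenberg matrix (L_{ij} = 0 for j > i+1) with all superdiagonal entries L_{i,i+1} = 1, and let Φ = (Φ_n)_{n≥0} satisfy (L - λ I)Φ = 0 with Φ_n ≠ 0 for all n. Set β_n = -Φ_{n+1}/Φ_n and let B = β Λ^0 + Λ be the upper bidiagonal matrix with diagonal (β_n) and superdiagonal 1's. Then B is invertible (as a semi-infinite upper triangular matrix with nonzero diagonal, since β_n ≠ 0), B Φ = 0, (L - λ I) B^{-1} is lower triangular, and hence the conjugate L̃ - λ I := B (L - λ I) B^{-1} is again lower Hessenberg with superdiagonal 1's. -/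
lemma aux_tsum_pair (f : ℕ → ℝ) (n : ℕ) (h : ∀ k, k ≠ n → k ≠ n + 1 → f k = 0) :
    ∑' k, f k = f n + f (n + 1) := by
  rw [tsum_eq_sum (s := {n, n + 1}) (by intro k hk; simp at hk; exact h k hk.1 hk.2)]
  rw [Finset.sum_insert (by simp), Finset.sum_singleton]

lemma aux_tsum_range (f : ℕ → ℝ) (n : ℕ) (h : ∀ k, n ≤ k → f k = 0) :
    ∑' k, f k = ∑ k ∈ Finset.range n, f k := by
  apply tsum_eq_sum; intro k hk; exact h k (by simpa using hk)

/-- Let L be semi-infinite lower Hessenberg (L_{ij} = 0 for j > i+1) with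
unit superdiagonal, and Φ a null vector of L - λI with all entries nonzero. With
β_n := -Φ_{n+1}/Φ_n and B := diag(β) + Λ, one has: B Φ = 0; B is invertible with upper
triangular inverse C; (L - λI) C is lower triangular; and L̃ - λI := B (L - λI) C is
again lower Hessenberg with unit superdiagonal. -/
theorem stmt9 (L : ℕ → ℕ → ℝ) (lam : ℝ) (Φ : ℕ → ℝ)
    (hHess : ∀ i j : ℕ, i + 1 < j → L i j = 0)
    (hsup : ∀ i : ℕ, L i (i + 1) = 1)
    (hΦ : ∀ n : ℕ, Φ n ≠ 0)
    (hnull : ∀ i : ℕ, (∑' k : ℕ, L i k * Φ k) = lam * Φ i) :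
    ∀ B : ℕ → ℕ → ℝ,
      (B = fun i j => if j = i then -Φ (i + 1) / Φ i else if j = i + 1 then 1 else 0) →
      (∀ n : ℕ, (∑' k : ℕ, B n k * Φ k) = 0) ∧
      ∃ C : ℕ → ℕ → ℝ,
        (∀ i j : ℕ, j < i → C i j = 0) ∧
        smul' B C = idm ∧ smul' C B = idm ∧
        (let Lsh : ℕ → ℕ → ℝ := fun i j => L i j - if i = j then lam else 0
         (∀ i j : ℕ, i < j → smul' Lsh C i j = 0) ∧
         (∀ i j : ℕ, i + 1 < j → smul' (smul' B Lsh) C i j = 0) ∧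
         (∀ i : ℕ, smul' (smul' B Lsh) C i (i + 1) = 1)) := by
  intro B hB
  subst hB
  set Lsh : ℕ → ℕ → ℝ := fun i j => L i j - if i = j then lam else 0 with hLshdef
  set C : ℕ → ℕ → ℝ := fun i j => if j < i then 0 else -Φ i / Φ (j + 1) with hCdef
  -- basic facts
  have hLsh0 : ∀ i k, i + 1 < k → Lsh i k = 0 := by
    intro i k hk
    simp only [hLshdef]
    rw [hHess i k hk, if_neg (by omega)]
    ring
  have hC0 : ∀ i j, j < i → C i j = 0 := by
    intro i j h; simp [hCdef, h]
  have hCval : ∀ i j, i ≤ j → C i j = -Φ i / Φ (j + 1) := by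
    intro i j h; simp [hCdef, Nat.not_lt.2 h]
  -- null vector identity as finite sum
  have hnull' : ∀ i : ℕ, ∑ k ∈ Finset.range (i + 2), Lsh i k * Φ k = 0 := by
    intro i
    have h1 : ∑' k, L i k * Φ k = ∑ k ∈ Finset.range (i + 2), L i k * Φ k := by
      apply aux_tsum_range
      intro k hk
      rw [hHess i k (by omega)]; ring
    have h2 : ∑ k ∈ Finset.range (i + 2), Lsh i k * Φ k
        = ∑ k ∈ Finset.range (i + 2), L i k * Φ k
          - ∑ k ∈ Finset.range (i + 2), (if i = k then lam else 0) * Φ k := by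
      rw [← Finset.sum_sub_distrib]
      apply Finset.sum_congr rfl
      intro k _; simp only [hLshdef]; ring
    rw [h2, ← h1, hnull i]
    simp [ite_mul, Finset.sum_ite_eq, Finset.mem_range]
  -- row of B times vector
  have hBrow : ∀ (n : ℕ) (g : ℕ → ℝ),
      (∑' k, (if k = n then -Φ (n + 1) / Φ n else if k = n + 1 then 1 else 0) * g k)
        = (-Φ (n + 1) / Φ n) * g n + g (n + 1) := by
    intro n g
    rw [aux_tsum_pair _ n (by intro k h1 h2; simp [h1, h2])]
    simp
  -- Part 1 : B Φ = 0
  have part1 : ∀ n : ℕ,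
      (∑' k, (if k = n then -Φ (n + 1) / Φ n else if k = n + 1 then 1 else 0) * Φ k) = 0 := by
    intro n
    rw [hBrow n Φ]
    field_simp [hΦ n, hΦ (n+1)]
    ring
  refine ⟨part1, C, hC0, ?_, ?_, ?_, ?_, ?_⟩
  -- B C = I
  · funext i j
    show (∑' k, (if k = i then -Φ (i + 1) / Φ i else if k = i + 1 then 1 else 0) * C k j) = idm i j
    rw [hBrow i (fun k => C k j)]
    rcases lt_trichotomy j i with h | h | h
    · rw [hC0 i j h, hC0 (i + 1) j (by omega), idm]
      simp [Nat.ne_of_gt h]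
    · subst h
      rw [hCval j j le_rfl, hC0 (j + 1) j (by omega), idm]
      simp only [if_pos rfl]
      field_simp [hΦ j, hΦ (j+1)]
      simp
    · rw [hCval i j h.le, hCval (i + 1) j h, idm, if_neg (by omega)]
      field_simp [hΦ i, hΦ (i+1), hΦ j, hΦ (j+1)]
      ring
  -- C B = I
  · funext i j
    show (∑' k, C i k * (if j = k then -Φ (k + 1) / Φ k else if j = k + 1 then 1 else 0)) = idm i j
    match j with
    | 0 =>
      rw [tsum_eq_sum (s := {0}) (by
        intro k hk
        simp only [Finset.mem_singleton] at hk
        rw [if_neg (by omega), if_neg (by omega)]; ring)]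
      rw [Finset.sum_singleton]
      rcases Nat.eq_zero_or_pos i with h | h
      · subst h
        rw [hCval 0 0 le_rfl, idm]
        simp only [if_pos rfl]
        field_simp [hΦ 0, hΦ 1]
        rw [if_pos trivial, if_pos trivial]
        field_simp [hΦ 0]
      · rw [hC0 i 0 h, zero_mul, idm]
        rw [if_neg (by omega)]
    | m + 1 =>
      rw [tsum_eq_sum (s := {m, m + 1}) (by
        intro k hk
        simp only [Finset.mem_insert, Finset.mem_singleton] at hk
        push_neg at hk
        rw [if_neg (by omega), if_neg (by omega)]; ring)]
      rw [Finset.sum_insert (by simp), Finset.sum_singleton]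
      rw [if_neg (by omega), if_pos rfl, if_pos rfl]
      rcases lt_trichotomy i (m + 1) with h | h | h
      · rw [hCval i m (by omega), hCval i (m + 1) (by omega), idm, if_neg (by omega)]
        field_simp [hΦ i, hΦ (m+1), hΦ (m+2)]
        ring
      · subst h
        rw [hC0 (m + 1) m (by omega), hCval (m + 1) (m + 1) le_rfl, idm, if_pos rfl]
        field_simp [hΦ (m+1), hΦ (m+2)]
        ring
      · rw [hC0 i m (by omega), hC0 i (m + 1) h, zero_mul, zero_mul, idm]
        rw [if_neg (by omega)]
        ring
  -- Lsh C lower triangular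
  all_goals {
    have hLC : ∀ i j : ℕ, smul' Lsh C i j
        = ∑ k ∈ Finset.range (i + 2), Lsh i k * C k j := by
      intro i j
      apply aux_tsum_range
      intro k hk
      rw [hLsh0 i k (by omega)]; ring
    have hLCtri : ∀ i j : ℕ, i < j → smul' Lsh C i j = 0 := by
      intro i j hij
      rw [hLC i j]
      have : ∀ k ∈ Finset.range (i + 2), Lsh i k * C k j
          = (-1 / Φ (j + 1)) * (Lsh i k * Φ k) := by
        intro k hk
        simp only [Finset.mem_range] at hk
        rw [hCval k j (by omega)]
        ring
      rw [Finset.sum_congr rfl this, ← Finset.mul_sum, hnull' i, mul_zero]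
    have hLCdiag : ∀ i : ℕ, smul' Lsh C i i = 1 := by
      intro i
      rw [hLC i i]
      have hsplit : ∑ k ∈ Finset.range (i + 2), Lsh i k * Φ k
          = ∑ k ∈ Finset.range (i + 1), Lsh i k * Φ k + Lsh i (i + 1) * Φ (i + 1) :=
        Finset.sum_range_succ _ _
      have hLshsup : Lsh i (i + 1) = 1 := by
        simp only [hLshdef]
        rw [hsup i, if_neg (by omega)]; ring
      have hsum1 : ∑ k ∈ Finset.range (i + 1), Lsh i k * Φ k = -Φ (i + 1) := by
        have := hnull' i
        rw [hsplit, hLshsup] at this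
        linarith
      rw [Finset.sum_range_succ, hC0 (i + 1) i (by omega), mul_zero, add_zero]
      have : ∀ k ∈ Finset.range (i + 1), Lsh i k * C k i
          = (-1 / Φ (i + 1)) * (Lsh i k * Φ k) := by
        intro k hk
        simp only [Finset.mem_range] at hk
        rw [hCval k i (by omega)]
        ring
      rw [Finset.sum_congr rfl this, ← Finset.mul_sum, hsum1]
      field_simp [hΦ (i+1)]
    have hBLsh : ∀ i k : ℕ, smul' (fun i j => if j = i then -Φ (i + 1) / Φ i
          else if j = i + 1 then 1 else 0) Lsh i k
        = (-Φ (i + 1) / Φ i) * Lsh i k + Lsh (i + 1) k := by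
      intro i k
      exact hBrow i (fun m => Lsh m k)
    have hBLC : ∀ i j : ℕ, smul' (smul' (fun i j => if j = i then -Φ (i + 1) / Φ i
          else if j = i + 1 then 1 else 0) Lsh) C i j
        = (-Φ (i + 1) / Φ i) * smul' Lsh C i j + smul' Lsh C (i + 1) j := by
      intro i j
      have h1 : smul' (smul' (fun i j => if j = i then -Φ (i + 1) / Φ i
            else if j = i + 1 then 1 else 0) Lsh) C i j
          = ∑ k ∈ Finset.range (i + 3),
              ((-Φ (i + 1) / Φ i) * Lsh i k + Lsh (i + 1) k) * C k j := by
        have : smul' (smul' (fun i j => if j = i then -Φ (i + 1) / Φ i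
              else if j = i + 1 then 1 else 0) Lsh) C i j
            = ∑' k, ((-Φ (i + 1) / Φ i) * Lsh i k + Lsh (i + 1) k) * C k j := by
          apply tsum_congr
          intro k
          rw [hBLsh i k]
        rw [this]
        apply aux_tsum_range
        intro k hk
        rw [hLsh0 i k (by omega), hLsh0 (i + 1) k (by omega)]
        ring
      have h2 : ∀ m : ℕ, m ≤ i + 1 → smul' Lsh C m j
          = ∑ k ∈ Finset.range (i + 3), Lsh m k * C k j := by
        intro m hm
        rw [smul']
        apply aux_tsum_range
        intro k hk
        rw [hLsh0 m k (by omega)]; ring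
      rw [h1, h2 i (by omega), h2 (i + 1) le_rfl, Finset.mul_sum, ← Finset.sum_add_distrib]
      apply Finset.sum_congr rfl
      intro k _
      ring
    first
    | exact hLCtri
    | (intro i j hij
       rw [hBLC i j, hLCtri i j (by omega), hLCtri (i + 1) j (by omega), mul_zero, add_zero])
    | (intro i
       rw [hBLC i (i + 1), hLCtri i (i + 1) (by omega), hLCdiag (i + 1), mul_zero, zero_add])
  }
end

section
/- Christoffel–Darboux determinant identity: for a weight ρ on ℝ with Hankel moment matrix (μ_{i+j})_{0≤i,j≤n} of nonzero determinant D_{n+1}, the sum Σ_{j=0}^{n} h_j^{-1} p_j(u) p_j(v) of products of the monic orthogonal polynomials p_j (with norms h_j = ∫ p_j^2 ρ) equals D_n((u-z)(v-z)ρ(z)) / D_{n+1}(ρ), where D_n((u-z)(v-z)ρ) is the determinant of the n×n matrix of moments of the weight (u-z)(v-z)ρ(z); equivalently it equals -(1/D_{n+1}) times the determinant of the bordered (n+2)×(n+2) matrix with top-left entry 0, first row (0, 1, v, ..., v^n), first column (0, 1, u, ..., u^n)^T, and remaining block (μ_{i+j})_{0≤i,j≤n}. -/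
/-!
Write `D_k = det (μ_{i+j})_{i,j<k}` and `q_k = D_k p_k`. By Cramer's rule the coefficients of
`q_k` form the last row of the adjugate of the Hankel matrix `H_{k+1}`, so
`∑_i (q_k)_i μ_{i+m} = D_{k+1} δ_{mk}` for `m ≤ k`. Hence the lower triangular matrix `P` of
these coefficients satisfies `P H Pᵀ = diag (D_k D_{k+1})`, and the Christoffel–Darboux sum is
the quadratic form `vᵀ H⁻¹ u` with `u = (u^i)`, `v = (v^j)`. The Schur complement of `H` in the
bordered matrix shows that its determinant is `-D_{n+1} vᵀ H⁻¹ u`. On the other hand,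
subtracting `u` times each row from the next and then `v` times each column from the next turns
the border into unit vectors and the Hankel block of `μ` into that of the moments of
`(u - z)(v - z)ρ`, so the bordered determinant is also `-D_n((u - z)(v - z)ρ)`.
-/

open Matrix Finset

namespace Matrix

section Field

variable {ι K : Type*} [Field K] [Fintype ι] [DecidableEq ι]

lemma inv_eq_of_mul_mul_transpose_eq_diagonal {H P : Matrix ι ι K} {d : ι → K}
    (hd : ∀ i, d i ≠ 0) (h : P * H * Pᵀ = diagonal d) :
    H⁻¹ = Pᵀ * diagonal d⁻¹ * P := by
  refine inv_eq_left_inv ?_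
  have hleft : diagonal d⁻¹ * P * H * Pᵀ = 1 := by
    rw [show diagonal d⁻¹ * P * H * Pᵀ = diagonal d⁻¹ * (P * H * Pᵀ) by
      simp only [Matrix.mul_assoc], h, diagonal_mul_diagonal, ← diagonal_one]
    exact congrArg diagonal (funext fun i => inv_mul_cancel₀ (hd i))
  simpa only [Matrix.mul_assoc] using mul_eq_one_comm.1 hleft

lemma dotProduct_inv_mulVec_of_mul_mul_transpose_eq_diagonal {H P : Matrix ι ι K}
    {d : ι → K} (hd : ∀ i, d i ≠ 0) (h : P * H * Pᵀ = diagonal d) (r c : ι → K) :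
    r ⬝ᵥ (H⁻¹ *ᵥ c) = ∑ i, (P *ᵥ r) i * (P *ᵥ c) i / d i := by
  rw [inv_eq_of_mul_mul_transpose_eq_diagonal hd h, ← mulVec_mulVec, ← mulVec_mulVec,
    dotProduct_mulVec, vecMul_transpose, dotProduct]
  exact sum_congr rfl fun i _ => by rw [mulVec_diagonal, Pi.inv_apply]; ring

end Field

variable {R : Type*} [CommRing R] {m : ℕ}

lemma det_of_sub_smul_pred_row (A : Matrix (Fin (m + 1)) (Fin (m + 1)) R) (c : R) :
    det (of (Fin.cons (A 0) fun i => A i.succ - c • A i.castSucc)) = det A :=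
  (det_eq_of_forall_row_eq_smul_add_pred (fun _ => c) (fun j => by simp)
    fun i j => by simp).symm

lemma det_of_sub_mul_pred_col (A : Matrix (Fin (m + 1)) (Fin (m + 1)) R) (c : R) :
    det (of fun i => Fin.cons (A i 0) fun j => A i j.succ - c * A i j.castSucc) = det A :=
  (det_eq_of_forall_col_eq_smul_add_pred (fun _ => c) (fun i => by simp)
    fun i j => by simp).symm

lemma det_eq_neg_det_submatrix_succ_succ (A : Matrix (Fin (m + 2)) (Fin (m + 2)) R)
    (h00 : A 0 0 = 0) (h01 : A 0 1 = 1) (h10 : A 1 0 = 1)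
    (hrow : ∀ j : Fin m, A 0 j.succ.succ = 0) (hcol : ∀ i : Fin m, A i.succ.succ 0 = 0) :
    det A = -det (A.submatrix (fun i : Fin m => i.succ.succ) fun j : Fin m => j.succ.succ) := by
  rw [det_succ_row_zero, Fin.sum_univ_succ, Fin.sum_univ_succ]
  simp only [h00, Fin.succ_zero_eq_one, h01, hrow, mul_zero, zero_mul, sum_const_zero, add_zero,
    zero_add]
  rw [det_succ_column_zero, Fin.sum_univ_succ]
  simp [h10, hcol, submatrix_submatrix, Function.comp_def]

/-- The square matrix `[[0, r], [c, H]]`. -/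
def bordered (r c : Fin m → R) (H : Matrix (Fin m) (Fin m) R) :
    Matrix (Fin (m + 1)) (Fin (m + 1)) R :=
  of (Fin.cons (Fin.cons 0 r) fun i => Fin.cons (c i) (H i))

lemma bordered_eq_submatrix_fromBlocks (r c : Fin m → R) (H : Matrix (Fin m) (Fin m) R) :
    bordered r c H = (fromBlocks H (replicateCol Unit c) (replicateRow Unit r) 0).submatrix
      ((finSuccEquiv m).trans (Equiv.optionEquivSumPUnit (Fin m)))
      ((finSuccEquiv m).trans (Equiv.optionEquivSumPUnit (Fin m))) := by
  ext i j
  cases i using Fin.cases <;> cases j using Fin.cases <;> simp [bordered]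

lemma det_bordered {K : Type*} [Field K] (r c : Fin m → K) {H : Matrix (Fin m) (Fin m) K}
    (hH : det H ≠ 0) : det (bordered r c H) = -(det H * (r ⬝ᵥ (H⁻¹ *ᵥ c))) := by
  have : Invertible H := invertibleOfIsUnitDet H (isUnit_iff_ne_zero.2 hH)
  rw [bordered_eq_submatrix_fromBlocks, det_submatrix_equiv_self, det_fromBlocks₁₁,
    det_unique (n := Unit), invOf_eq_nonsing_inv, Matrix.mul_assoc, ← replicateCol_mulVec,
    sub_apply, replicateRow_mul_replicateCol_apply, zero_apply, zero_sub, mul_neg]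

end Matrix

namespace ChristoffelDarboux

variable {R : Type*} (μ : ℕ → R)

def hankel (k : ℕ) : Matrix (Fin k) (Fin k) R := of fun i j => μ (i + j)

@[simp]
lemma hankel_apply (k : ℕ) (i j : Fin k) : hankel μ k i j = μ (i + j) := rfl

lemma hankel_transpose (k : ℕ) : (hankel μ k)ᵀ = hankel μ k := by
  ext i j
  simp [add_comm]

variable [CommRing R]

/-- The coefficient of `x ^ i` in `D_k p_k(x)`, where `p_k` is the `k`-th monic orthogonal
polynomial. -/
def opCoeff (k i : ℕ) : R :=
  if h : i ≤ k then adjugate (hankel μ (k + 1)) (Fin.last k) ⟨i, by omega⟩ else 0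

def opPoly (k : ℕ) (x : R) : R := ∑ i ∈ range (k + 1), opCoeff μ k i * x ^ i

lemma opCoeff_of_lt {k i : ℕ} (h : k < i) : opCoeff μ k i = 0 := by
  simp [opCoeff, not_le.2 h]

lemma opCoeff_self (k : ℕ) : opCoeff μ k k = det (hankel μ k) := by
  rw [opCoeff, dif_pos le_rfl, adjugate_fin_succ_eq_det_submatrix]
  have : (⟨k, by omega⟩ : Fin (k + 1)) = Fin.last k := rfl
  simp only [this, Fin.val_last, ← two_mul, pow_mul, neg_one_sq, one_pow, one_mul,
    Fin.succAbove_last]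
  rfl

lemma sum_adjugate_hankel_last_mul (k : ℕ) (f : ℕ → R) :
    ∑ i : Fin (k + 1), adjugate (hankel μ (k + 1)) (Fin.last k) i * f i =
      ∑ i ∈ range (k + 1), opCoeff μ k i * f i := by
  rw [← Fin.sum_univ_eq_sum_range]
  exact sum_congr rfl fun i _ => by rw [opCoeff, dif_pos (Nat.lt_succ_iff.1 i.2)]

lemma sum_range_opCoeff_mul {k n : ℕ} (hk : k < n) (f : ℕ → R) :
    ∑ i ∈ range n, opCoeff μ k i * f i = ∑ i ∈ range (k + 1), opCoeff μ k i * f i := by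
  refine (sum_subset (range_subset_range.2 hk) fun i _ hi => ?_).symm
  rw [opCoeff_of_lt μ (by simpa using hi), zero_mul]

lemma det_updateCol_hankel_pow (k : ℕ) (x : R) :
    det (of fun i j : Fin (k + 1) => if (j : ℕ) < k then μ (i + j) else x ^ (i : ℕ)) =
      opPoly μ k x := by
  have : (of fun i j : Fin (k + 1) => if (j : ℕ) < k then μ (i + j) else x ^ (i : ℕ)) =
      updateCol (hankel μ (k + 1)) (Fin.last k) fun i => x ^ (i : ℕ) := by
    ext i j
    simp [updateCol_apply, Fin.ext_iff, lt_iff_le_and_ne, Fin.is_le]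
  rw [this, ← cramer_apply, cramer_eq_adjugate_mulVec, mulVec, dotProduct,
    sum_adjugate_hankel_last_mul μ k fun i => x ^ i, opPoly]

lemma sum_opCoeff_mul_moment {k m : ℕ} (hm : m ≤ k) :
    ∑ i ∈ range (k + 1), opCoeff μ k i * μ (i + m) =
      if m = k then det (hankel μ (k + 1)) else 0 := by
  have h := congr_fun (congr_fun (adjugate_mul (hankel μ (k + 1))) (Fin.last k)) ⟨m, by omega⟩
  rw [← sum_adjugate_hankel_last_mul μ k fun i => μ (i + m)]
  simpa [mul_apply, one_apply, Fin.ext_iff, eq_comm] using h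

def opCoeffMatrix (m : ℕ) : Matrix (Fin m) (Fin m) R := of fun j i => opCoeff μ j i

variable {m : ℕ}

lemma opCoeffMatrix_mulVec_pow (x : R) (j : Fin m) :
    (opCoeffMatrix μ m *ᵥ fun i => x ^ (i : ℕ)) j = opPoly μ j x := by
  simp only [mulVec, dotProduct, opCoeffMatrix, of_apply]
  rw [Fin.sum_univ_eq_sum_range (fun i => opCoeff μ j i * x ^ i),
    sum_range_opCoeff_mul μ j.2, opPoly]

lemma opCoeffMatrix_mul_hankel_apply {j l : Fin m} (hl : l ≤ j) :
    (opCoeffMatrix μ m * hankel μ m) j l = if l = j then det (hankel μ (j + 1)) else 0 := by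
  simp only [mul_apply, opCoeffMatrix, of_apply, hankel_apply]
  rw [Fin.sum_univ_eq_sum_range (fun i => opCoeff μ j i * μ (i + l)),
    sum_range_opCoeff_mul μ j.2, sum_opCoeff_mul_moment μ hl]
  simp only [Fin.val_inj]

lemma opCoeffMatrix_mul_hankel_mul_transpose_apply_of_le {j l : Fin m} (hl : l ≤ j) :
    (opCoeffMatrix μ m * hankel μ m * (opCoeffMatrix μ m)ᵀ) j l =
      if j = l then det (hankel μ j) * det (hankel μ (j + 1)) else 0 := by
  have hP : ∀ i : Fin m, l < i → opCoeffMatrix μ m l i = 0 := fun i h => opCoeff_of_lt μ h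
  rw [mul_apply, sum_eq_single j]
  · split_ifs with h
    · subst h
      rw [opCoeffMatrix_mul_hankel_apply μ le_rfl, if_pos rfl, transpose_apply, mul_comm]
      simp [opCoeffMatrix, opCoeff_self]
    · rw [transpose_apply, hP j (lt_of_le_of_ne hl (Ne.symm h)), mul_zero]
  · intro i _ hi
    rcases lt_or_gt_of_ne hi with hij | hji
    · rw [opCoeffMatrix_mul_hankel_apply μ hij.le, if_neg hij.ne, zero_mul]
    · rw [transpose_apply, hP i (hl.trans_lt hji), mul_zero]
  · simp

lemma opCoeffMatrix_mul_hankel_mul_transpose :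
    opCoeffMatrix μ m * hankel μ m * (opCoeffMatrix μ m)ᵀ =
      diagonal fun j : Fin m => det (hankel μ j) * det (hankel μ (j + 1)) := by
  have hsymm : (opCoeffMatrix μ m * hankel μ m * (opCoeffMatrix μ m)ᵀ)ᵀ =
      opCoeffMatrix μ m * hankel μ m * (opCoeffMatrix μ m)ᵀ := by
    rw [transpose_mul, transpose_mul, transpose_transpose, hankel_transpose, Matrix.mul_assoc]
  ext j l
  rw [diagonal_apply]
  rcases le_total l j with h | h
  · exact opCoeffMatrix_mul_hankel_mul_transpose_apply_of_le μ h
  · rw [← hsymm, transpose_apply, opCoeffMatrix_mul_hankel_mul_transpose_apply_of_le μ h]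
    rcases eq_or_ne l j with rfl | hne
    · rfl
    · rw [if_neg hne, if_neg hne.symm]

lemma pow_dotProduct_inv_hankel_mulVec_pow {K : Type*} [Field K] (μ : ℕ → K) (m : ℕ)
    (hD : ∀ k ≤ m, det (hankel μ k) ≠ 0) (u v : K) :
    (fun j : Fin m => v ^ (j : ℕ)) ⬝ᵥ ((hankel μ m)⁻¹ *ᵥ fun i => u ^ (i : ℕ)) =
      ∑ j ∈ range m,
        opPoly μ j v * opPoly μ j u / (det (hankel μ j) * det (hankel μ (j + 1))) := by
  rw [dotProduct_inv_mulVec_of_mul_mul_transpose_eq_diagonal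
    (fun j : Fin m => mul_ne_zero (hD j j.2.le) (hD (j + 1) j.2))
    (opCoeffMatrix_mul_hankel_mul_transpose μ),
    ← Fin.sum_univ_eq_sum_range]
  simp only [opCoeffMatrix_mulVec_pow]

lemma det_bordered_pow_hankel (m : ℕ) (u v : R) :
    det (bordered (fun j : Fin (m + 1) => v ^ (j : ℕ)) (fun i => u ^ (i : ℕ))
        (hankel μ (m + 1))) =
      -det (hankel (fun k => u * v * μ k - (u + v) * μ (k + 1) + μ (k + 2)) m) := by
  set B :=
    bordered (fun j : Fin (m + 1) => v ^ (j : ℕ)) (fun i => u ^ (i : ℕ)) (hankel μ (m + 1))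
  set B₁ : Matrix _ _ R := of (Fin.cons (B 0) fun i => B i.succ - u • B i.castSucc)
  set B₂ : Matrix _ _ R :=
    of fun i => Fin.cons (B₁ i 0) fun j => B₁ i j.succ - v * B₁ i j.castSucc
  rw [← det_of_sub_smul_pred_row B u, ← det_of_sub_mul_pred_col B₁ v,
    det_eq_neg_det_submatrix_succ_succ B₂]
  · congr 2
    ext i j
    simp only [bordered, of_apply, submatrix_apply, Fin.cons_succ, Fin.castSucc_succ,
      Pi.sub_apply, Fin.val_succ, Fin.cons_zero, Pi.smul_apply, Fin.val_castSucc, smul_eq_mul,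
      hankel_apply, B₂, B₁, B]
    ring_nf
  all_goals
    intros
    simp [B₂, B₁, B, bordered, pow_succ, mul_comm]

end ChristoffelDarboux

open ChristoffelDarboux in
/-- Christoffel–Darboux determinant identity: for Hankel moments μ with
all leading minors `D_k = det(μ_{i+j})_{k×k}` nonzero, monic orthogonal polynomials
`p_j(x) = D_j⁻¹ det[(μ_{i+j'}) | (x^i)]` and norms `h_j = D_{j+1}/D_j`,
`Σ_{j=0}^n h_j⁻¹ p_j(u) p_j(v) = det(uv μ_{i+j} - (u+v) μ_{i+j+1} + μ_{i+j+2})_{n×n} / D_{n+1}`,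
which also equals `-(1/D_{n+1})` times the bordered (n+2)×(n+2) determinant with corner 0,
first row `(0,1,v,…,v^n)`, first column `(0,1,u,…,u^n)ᵀ` and block `(μ_{i+j})_{0≤i,j≤n}`. -/
theorem stmt11 (μ : ℕ → ℝ) (n : ℕ)
    (hD : ∀ k : ℕ, Matrix.det (Matrix.of fun i j : Fin k => μ (i + j)) ≠ 0)
    (u v : ℝ)
    (D : ℕ → ℝ) (hDdef : ∀ k, D k = Matrix.det (Matrix.of fun i j : Fin k => μ (i + j)))
    (p : ℕ → ℝ → ℝ)
    (hpdef : ∀ (k : ℕ) (x : ℝ), p k x = (D k)⁻¹ *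
      Matrix.det (Matrix.of fun i j : Fin (k + 1) =>
        if h : (j : ℕ) < k then μ (i + j) else x ^ (i : ℕ))) :
    (∑ j ∈ Finset.range (n + 1), (D j / D (j + 1)) * p j u * p j v) =
      Matrix.det (Matrix.of fun i j : Fin n =>
        u * v * μ (i + j) - (u + v) * μ (i + j + 1) + μ (i + j + 2)) / D (n + 1) ∧
    (∑ j ∈ Finset.range (n + 1), (D j / D (j + 1)) * p j u * p j v) =
      -(D (n + 1))⁻¹ *
        Matrix.det (Matrix.of fun i j : Fin (n + 2) =>
          if (i : ℕ) = 0 then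
            (if (j : ℕ) = 0 then 0 else v ^ ((j : ℕ) - 1))
          else if (j : ℕ) = 0 then u ^ ((i : ℕ) - 1)
          else μ (((i : ℕ) - 1) + ((j : ℕ) - 1))) := by
  have hDk : ∀ k, D k = det (hankel μ k) := hDdef
  have hD' : ∀ k, D k ≠ 0 := fun k => hDdef k ▸ hD k
  have hp : ∀ k x, p k x = (D k)⁻¹ * opPoly μ k x := fun k x => by
    simp only [hpdef, dite_eq_ite, det_updateCol_hankel_pow]
  have hB : (Matrix.of fun i j : Fin (n + 2) =>
          if (i : ℕ) = 0 then
            (if (j : ℕ) = 0 then 0 else v ^ ((j : ℕ) - 1))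
          else if (j : ℕ) = 0 then u ^ ((i : ℕ) - 1)
          else μ (((i : ℕ) - 1) + ((j : ℕ) - 1))) =
        bordered (fun j : Fin (n + 1) => v ^ (j : ℕ)) (fun i => u ^ (i : ℕ))
          (hankel μ (n + 1)) := by
    ext i j
    cases i using Fin.cases <;> cases j using Fin.cases <;> simp [bordered]
  have hkernel : (∑ j ∈ Finset.range (n + 1), (D j / D (j + 1)) * p j u * p j v) =
      (fun j : Fin (n + 1) => v ^ (j : ℕ)) ⬝ᵥ
        ((hankel μ (n + 1))⁻¹ *ᵥ fun i => u ^ (i : ℕ)) := by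
    rw [pow_dotProduct_inv_hankel_mulVec_pow μ (n + 1) (fun k _ => hD k)]
    refine sum_congr rfl fun j _ => ?_
    rw [hp, hp, ← hDk, ← hDk]
    field_simp [hD' j, hD' (j + 1)]
  have hschur := det_bordered (H := hankel μ (n + 1)) (fun j : Fin (n + 1) => v ^ (j : ℕ))
    (fun i => u ^ (i : ℕ)) (hD (n + 1))
  rw [← hB, ← hkernel, ← hDk] at hschur
  have hrow := det_bordered_pow_hankel μ n u v
  rw [← hB, hschur] at hrow
  refine ⟨?_, ?_⟩
  · rw [eq_div_iff (hD' _), mul_comm]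
    exact neg_inj.1 hrow
  · rw [hschur]
    field_simp [hD' (n + 1)]
end
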